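/- Assume the star-connected occupied component C(0) of the origin is finite and nonempty. Then there exists a plus-connected S-cycle all of whose sites are vacant and star-adjacent to some site of C(0), and whose site set surrounds the origin (0,0). -/

import Mathlib

/-- A site of the square lattice, identified with a unit square via its centre. -/
abbrev Site := ℤ × ℤ

/-- Star adjacency: distinct sites whose coordinates differ by at most 1. -/
def starAdj (a b : Site) : Prop :=
  a ≠ b ∧ |a.1 - b.1| ≤ 1 ∧ |a.2 - b.2| ≤ 1

/-- Plus adjacency: sites at ℓ¹-distance exactly 1. -/
def plusAdj (a b : Site) : Prop :=
  |a.1 - b.1| + |a.2 - b.2| = 1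

/-- The star-connected occupied component `C(0)` of the origin. -/
def starComp (ω : Site → Bool) : Set Site :=
  {a | ω (0, 0) = true ∧ ω a = true ∧
    Relation.ReflTransGen (fun x y => ω x = true ∧ ω y = true ∧ starAdj x y) (0, 0) a}

/-- The plus-connected occupied component `C⁺(0)` of the origin. -/
def plusComp (ω : Site → Bool) : Set Site :=
  {a | ω (0, 0) = true ∧ ω a = true ∧
    Relation.ReflTransGen (fun x y => ω x = true ∧ ω y = true ∧ plusAdj x y) (0, 0) a}

/-- `Λ₀`: vacant sites star-adjacent to some site of `C(0)`. -/
def lambda0 (ω : Site → Bool) : Set Site :=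
  {a | ω a = false ∧ ∃ b ∈ starComp ω, starAdj a b}

/-- `Λ₀⁺`: vacant sites star-adjacent to some site of `C⁺(0)`. -/
def lambda0Plus (ω : Site → Bool) : Set Site :=
  {a | ω a = false ∧ ∃ b ∈ plusComp ω, starAdj a b}

/-- A plus-connected `S`-cycle: a nonempty list of pairwise distinct sites,
consecutive ones plus-adjacent, and the last plus-adjacent to the first. -/
def IsPlusSCycle (L : List Site) : Prop :=
  L ≠ [] ∧ L.Nodup ∧ L.Chain' plusAdj ∧
    ∀ a ∈ L.head?, ∀ b ∈ L.getLast?, plusAdj b a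

/-- A star-connected `S`-cycle: a nonempty list of pairwise distinct sites,
consecutive ones star-adjacent, and the last star-adjacent to the first. -/
def IsStarSCycle (L : List Site) : Prop :=
  L ≠ [] ∧ L.Nodup ∧ L.Chain' starAdj ∧
    ∀ a ∈ L.head?, ∀ b ∈ L.getLast?, starAdj b a

/-- A finite set `A` surrounds a site `x ∉ A` if the plus-connected component
of `x` in the complement of `A` is finite. -/
def Surrounds (A : Set Site) (x : Site) : Prop :=
  x ∉ A ∧
    {y | Relation.ReflTransGen (fun u v => u ∉ A ∧ v ∉ A ∧ plusAdj u v) x y}.Finite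


lemma zmod2_cases (s : ZMod 2) : s = 0 ∨ s = 1 := by fin_cases s; exacts [Or.inl rfl, Or.inr rfl]

namespace SP

open List Classical

/-- consecutive pairs of a list -/
def pairs (l : List Site) : List (Site × Site) := l.zip l.tail

lemma pairs_nil : pairs [] = [] := rfl
lemma pairs_single (a : Site) : pairs [a] = [] := rfl
lemma pairs_cons₂ (a b : Site) (l : List Site) :
    pairs (a :: b :: l) = (a, b) :: pairs (b :: l) := rfl

lemma pairs_append_cons (m : Site) (v : List Site) : ∀ (u : List Site),
    pairs (u ++ m :: v) = pairs (u ++ [m]) ++ pairs (m :: v) := by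
  intro u
  induction u with
  | nil => simp [pairs]
  | cons a u ih =>
    cases u with
    | nil => simp [pairs_cons₂, pairs]
    | cons b u' =>
      show pairs (a :: b :: (u' ++ m :: v)) = _
      rw [pairs_cons₂, show b :: (u' ++ m :: v) = (b :: u') ++ m :: v from rfl, ih]
      simp [pairs_cons₂]

lemma mem_pairs {l : List Site} {p : Site × Site} (hp : p ∈ pairs l) :
    p.1 ∈ l ∧ p.2 ∈ l := by
  obtain ⟨h1, h2⟩ := List.of_mem_zip (by exact hp)
  exact ⟨h1, List.mem_of_mem_tail h2⟩

lemma map_fst_pairs : ∀ (l : List Site), (pairs l).map Prod.fst = l.dropLast := by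
  intro l
  induction l with
  | nil => rfl
  | cons a l ih =>
    cases l with
    | nil => rfl
    | cons b l' => rw [pairs_cons₂, List.map_cons, ih]; rfl

lemma map_snd_pairs : ∀ (l : List Site), (pairs l).map Prod.snd = l.tail := by
  intro l
  induction l with
  | nil => rfl
  | cons a l ih =>
    cases l with
    | nil => rfl
    | cons b l' =>
      rw [pairs_cons₂, List.map_cons, ih]; rfl

lemma chain'_pairs {R : Site → Site → Prop} : ∀ {l : List Site}, Chain' R l →
    ∀ p ∈ pairs l, R p.1 p.2 := by
  intro l
  induction l with
  | nil => intro _ p hp; simp [pairs] at hp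
  | cons a l ih =>
    cases l with
    | nil => intro _ p hp; simp [pairs] at hp
    | cons b l' =>
      intro h p hp
      simp only [List.Chain'] at h; rw [List.isChain_cons_cons] at h
      rw [pairs_cons₂, List.mem_cons] at hp
      rcases hp with rfl | hp
      · exact h.1
      · exact ih h.2 p hp

noncomputable def ind (P : Prop) : ZMod 2 := if P then 1 else 0

lemma ind_true {P : Prop} (h : P) : ind P = 1 := if_pos h
lemma ind_false {P : Prop} (h : ¬ P) : ind P = 0 := if_neg h

/-- parity-valued count of pairs satisfying a predicate -/
noncomputable def psum (f : Site × Site → Prop) (l : List (Site × Site)) : ZMod 2 :=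
  (l.map fun p => ind (f p)).sum

lemma psum_nil (f : Site × Site → Prop) : psum f [] = 0 := rfl

lemma psum_append (f : Site × Site → Prop) (l₁ l₂ : List (Site × Site)) :
    psum f (l₁ ++ l₂) = psum f l₁ + psum f l₂ := by
  simp [psum]

lemma psum_congr {f g : Site × Site → Prop} {l : List (Site × Site)}
    (h : ∀ p ∈ l, f p ↔ g p) : psum f l = psum g l := by
  unfold psum
  congr 1
  exact List.map_congr_left fun p hp => by
    by_cases hf : f p
    · rw [ind_true hf, ind_true ((h p hp).1 hf)]
    · rw [ind_false hf, ind_false fun hg => hf ((h p hp).2 hg)]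

lemma psum_eq_zero {f : Site × Site → Prop} {l : List (Site × Site)}
    (h : ∀ p ∈ l, ¬ f p) : psum f l = 0 := by
  unfold psum
  rw [List.sum_eq_zero]
  intro x hx
  obtain ⟨p, hp, rfl⟩ := List.mem_map.1 hx
  exact ind_false (h p hp)

lemma psum_perm (f : Site × Site → Prop) {l₁ l₂ : List (Site × Site)}
    (h : l₁.Perm l₂) : psum f l₁ = psum f l₂ :=
  List.Perm.sum_eq (h.map _)

/-- additive decomposition: psum f l = sum over the two coordinates -/
lemma psum_add_split (g : Site → ZMod 2) (l : List (Site × Site)) :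
    (l.map fun p => g p.1 + g p.2).sum
      = ((l.map Prod.fst).map g).sum + ((l.map Prod.snd).map g).sum := by
  induction l with
  | nil => simp
  | cons p l ih => simp [ih]; ring


/-- rotate counterclockwise / clockwise -/
def rcc (v : Site) : Site := (-v.2, v.1)
def rcw (v : Site) : Site := (v.2, -v.1)

lemma rcw_rcc (v : Site) : rcw (rcc v) = v := by simp [rcc, rcw]
lemma rcc_rcw (v : Site) : rcc (rcw v) = v := by simp [rcc, rcw]

def U4 (v : Site) : Prop := v = (1,0) ∨ v = (-1,0) ∨ v = (0,1) ∨ v = (0,-1)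

lemma plusAdj_iff {a b : Site} : plusAdj a b ↔ U4 (b - a) := by
  unfold plusAdj U4
  rw [abs_sub_comm a.1, abs_sub_comm a.2]
  rcases a with ⟨a1, a2⟩; rcases b with ⟨b1, b2⟩
  simp only [Prod.mk_sub_mk, Prod.mk.injEq]
  rw [Int.abs_eq_natAbs, Int.abs_eq_natAbs]
  omega

lemma U4.rcc {v : Site} (h : U4 v) : U4 (rcc v) := by
  rcases h with rfl | rfl | rfl | rfl <;> simp [SP.rcc, U4]

lemma U4.neg {v : Site} (h : U4 v) : U4 (-v) := by
  rcases h with rfl | rfl | rfl | rfl <;> simp [U4]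

lemma plusAdj_add_right {x : Site} {u : Site} (h : U4 u) : plusAdj x (x + u) := by
  rw [plusAdj_iff]; simpa using h

section Geo

variable (K : Set Site) (R : ℤ)

def Reach (x y : Site) : Prop :=
  Relation.ReflTransGen (fun u v => u ∉ K ∧ v ∉ K ∧ plusAdj u v) x y

def Far (p : Site) : Prop := R < |p.1| ∨ R < |p.2|

def Ext : Set Site := {x | x ∉ K ∧ ∃ y, Far R y ∧ Reach K x y}

def Fill : Set Site := (Ext K R)ᶜ

def Dir : Set (Site × Site) :=
  {d | d.1 ∈ Fill K R ∧ d.2 ∈ Ext K R ∧ plusAdj d.1 d.2}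

noncomputable def nxt (d : Site × Site) : Site × Site :=
  if d.2 + rcc (d.2 - d.1) ∈ Fill K R then (d.2 + rcc (d.2 - d.1), d.2)
  else if d.1 + rcc (d.2 - d.1) ∈ Fill K R then (d.1 + rcc (d.2 - d.1), d.2 + rcc (d.2 - d.1))
  else (d.1, d.1 + rcc (d.2 - d.1))

noncomputable def prv (d : Site × Site) : Site × Site :=
  if d.2 + rcw (d.2 - d.1) ∈ Fill K R then (d.2 + rcw (d.2 - d.1), d.2)
  else if d.1 + rcw (d.2 - d.1) ∈ Fill K R then (d.1 + rcw (d.2 - d.1), d.2 + rcw (d.2 - d.1))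
  else (d.1, d.1 + rcw (d.2 - d.1))

noncomputable def emit (d : Site × Site) : List Site :=
  if d.2 + rcc (d.2 - d.1) ∈ Fill K R then []
  else if d.1 + rcc (d.2 - d.1) ∈ Fill K R then [d.2]
  else [d.2, d.2 + rcc (d.2 - d.1)]

noncomputable def stepsOf (d : Site × Site) : List (Site × Site) :=
  if d.2 + rcc (d.2 - d.1) ∈ Fill K R then []
  else if d.1 + rcc (d.2 - d.1) ∈ Fill K R then [(d.2, d.2 + rcc (d.2 - d.1))]
  else [(d.2, d.2 + rcc (d.2 - d.1)), (d.2 + rcc (d.2 - d.1), d.1 + rcc (d.2 - d.1))]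

variable {K R}

lemma mem_Fill_iff {x : Site} : x ∈ Fill K R ↔ x ∉ Ext K R := Iff.rfl

lemma far_mem_Ext (hK : ∀ p ∈ K, |p.1| ≤ R ∧ |p.2| ≤ R) {p : Site}
    (hp : Far R p) : p ∈ Ext K R := by
  have hpK : p ∉ K := by
    intro h
    rcases hK p h with ⟨h1, h2⟩
    rcases hp with h | h <;> omega
  exact ⟨hpK, p, hp, Relation.ReflTransGen.refl⟩

lemma ext_step {x y : Site} (hx : x ∉ K) (hy : y ∈ Ext K R) (hxy : plusAdj x y) :
    x ∈ Ext K R := by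
  obtain ⟨hyK, z, hz, hr⟩ := hy
  exact ⟨hx, z, hz, Relation.ReflTransGen.head ⟨hx, hyK, hxy⟩ hr⟩

lemma dir_fst_mem {d : Site × Site} (hd : d ∈ Dir K R) : d.1 ∈ K := by
  by_contra h
  exact hd.1 (ext_step h hd.2.1 hd.2.2)

lemma ext_not_fill {x : Site} (h : x ∈ Ext K R) : x ∉ Fill K R := fun h' => h' h

lemma dir_unit {d : Site × Site} (hd : d ∈ Dir K R) : U4 (d.2 - d.1) :=
  plusAdj_iff.1 hd.2.2

lemma nxt_mem_Dir {d : Site × Site} (hd : d ∈ Dir K R) : nxt K R d ∈ Dir K R := by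
  obtain ⟨h1, h2, h3⟩ := hd
  have hu : U4 (rcc (d.2 - d.1)) := (dir_unit ⟨h1, h2, h3⟩).rcc
  unfold nxt
  split_ifs with hc hs
  · exact ⟨hc, h2, by rw [plusAdj_iff]; simpa using hu.neg⟩
  · refine ⟨hs, ?_, ?_⟩
    · exact not_not.1 hc
    · rw [plusAdj_iff]
      have : d.2 + rcc (d.2 - d.1) - (d.1 + rcc (d.2 - d.1)) = d.2 - d.1 := by ring
      rw [this]; exact plusAdj_iff.1 h3
  · exact ⟨h1, not_not.1 hs, by rw [plusAdj_iff]; simpa using hu⟩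

lemma prv_nxt {d : Site × Site} (hd : d ∈ Dir K R) : prv K R (nxt K R d) = d := by
  obtain ⟨h1, h2, h3⟩ := hd
  unfold nxt
  split_ifs with hc hs
  · -- concave case: nxt d = (d.2 + u, d.2)
    unfold prv
    have e1 : d.2 - (d.2 + rcc (d.2 - d.1)) = -(rcc (d.2 - d.1)) := by ring
    rw [e1]
    have e2 : rcw (-(rcc (d.2 - d.1))) = -(d.2 - d.1) := by
      simp [rcw, rcc, Prod.ext_iff]
    rw [e2]
    have e3 : d.2 + -(d.2 - d.1) = d.1 := by ring
    rw [e3]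
    rw [if_pos h1]
  · -- straight case: nxt d = (d.1 + u, d.2 + u)
    unfold prv
    have e1 : d.2 + rcc (d.2 - d.1) - (d.1 + rcc (d.2 - d.1)) = d.2 - d.1 := by ring
    rw [e1]
    have e2 : rcw (d.2 - d.1) = -(rcc (d.2 - d.1)) := by simp [rcw, rcc, Prod.ext_iff]
    rw [e2]
    have e3 : d.2 + rcc (d.2 - d.1) + -(rcc (d.2 - d.1)) = d.2 := by ring
    have e4 : d.1 + rcc (d.2 - d.1) + -(rcc (d.2 - d.1)) = d.1 := by ring
    rw [e3, e4, if_neg (ext_not_fill h2), if_pos h1]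
  · -- convex case: nxt d = (d.1, d.1 + u)
    unfold prv
    have e1 : d.1 + rcc (d.2 - d.1) - d.1 = rcc (d.2 - d.1) := by ring
    rw [e1, rcw_rcc]
    have e3 : d.1 + rcc (d.2 - d.1) + (d.2 - d.1) = d.2 + rcc (d.2 - d.1) := by ring
    have e4 : d.1 + (d.2 - d.1) = d.2 := by ring
    rw [e3, e4, if_neg hc, if_neg (ext_not_fill h2), ]


lemma plusAdj_ne {a b : Site} (h : plusAdj a b) : a ≠ b := by
  rintro rfl
  unfold plusAdj at h
  simp at h

lemma plusAdj_star {a b : Site} (h : plusAdj a b) : starAdj a b := by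
  refine ⟨plusAdj_ne h, ?_, ?_⟩ <;>
  · unfold plusAdj at h
    have h1 := abs_nonneg (a.1 - b.1)
    have h2 := abs_nonneg (a.2 - b.2)
    omega

lemma starAdj_offset {c e : Site} (he1 : e ≠ 0) (he2 : |e.1| ≤ 1) (he3 : |e.2| ≤ 1) :
    starAdj (c + e) c := by
  refine ⟨fun h => he1 ?_, ?_, ?_⟩
  · have h0 : c + e - c = 0 := by rw [h]; ring
    simpa using h0
  · have h4 : (c + e).1 - c.1 = e.1 := by rw [Prod.fst_add]; ring
    rw [h4]; exact he2
  · have h4 : (c + e).2 - c.2 = e.2 := by rw [Prod.snd_add]; ring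
    rw [h4]; exact he3

lemma u4_facts {v : Site} (hv : U4 v) : v ≠ 0 ∧ |v.1| ≤ 1 ∧ |v.2| ≤ 1 := by
  rcases hv with rfl | rfl | rfl | rfl <;>
    refine ⟨by simp [Prod.ext_iff], by norm_num, by norm_num⟩

lemma u4_diag_facts {v : Site} (hv : U4 v) :
    v + rcc v ≠ 0 ∧ |(v + rcc v).1| ≤ 1 ∧ |(v + rcc v).2| ≤ 1 := by
  rcases hv with rfl | rfl | rfl | rfl <;>
    refine ⟨by simp [rcc, Prod.ext_iff], by simp [rcc], by simp [rcc]⟩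

lemma dir_finite (hKfin : K.Finite) : (Dir K R).Finite := by
  have hsub : Dir K R ⊆ ⋃ c ∈ K,
      ({(c, c + ((1:ℤ),(0:ℤ))), (c, c + (-1,0)), (c, c + (0,1)), (c, c + (0,-1))} :
        Set (Site × Site)) := by
    intro d hd
    have h1 := dir_fst_mem hd
    have h2 := dir_unit hd
    simp only [Set.mem_iUnion]
    refine ⟨d.1, h1, ?_⟩
    have hd2 : d.2 = d.1 + (d.2 - d.1) := by ring
    have hd' : d = (d.1, d.1 + (d.2 - d.1)) := by
      rw [← hd2]
    rcases h2 with h | h | h | h <;>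
      rw [h] at hd' <;>
      simp only [Set.mem_insert_iff, Set.mem_singleton_iff] <;> tauto
  exact Set.Finite.subset
    (hKfin.biUnion fun c _ => (Set.toFinite _)) hsub

/-- full branch description of the boundary-following step -/
lemma nxt_cases (K : Set Site) (R : ℤ) (d : Site × Site) :
    (d.2 + rcc (d.2-d.1) ∈ Fill K R ∧ nxt K R d = (d.2 + rcc (d.2-d.1), d.2) ∧
        emit K R d = [] ∧ stepsOf K R d = [])
  ∨ (d.2 + rcc (d.2-d.1) ∉ Fill K R ∧ d.1 + rcc (d.2-d.1) ∈ Fill K R ∧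
        nxt K R d = (d.1 + rcc (d.2-d.1), d.2 + rcc (d.2-d.1)) ∧
        emit K R d = [d.2] ∧ stepsOf K R d = [(d.2, d.2 + rcc (d.2-d.1))])
  ∨ (d.2 + rcc (d.2-d.1) ∉ Fill K R ∧ d.1 + rcc (d.2-d.1) ∉ Fill K R ∧
        nxt K R d = (d.1, d.1 + rcc (d.2-d.1)) ∧
        emit K R d = [d.2, d.2 + rcc (d.2-d.1)] ∧
        stepsOf K R d = [(d.2, d.2 + rcc (d.2-d.1)), (d.2 + rcc (d.2-d.1), d.1 + rcc (d.2-d.1))]) := by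
  unfold nxt emit stepsOf
  split_ifs with h1 h2
  · exact Or.inl ⟨h1, rfl, rfl, rfl⟩
  · exact Or.inr (Or.inl ⟨h1, h2, rfl, rfl, rfl⟩)
  · exact Or.inr (Or.inr ⟨h1, h2, rfl, rfl, rfl⟩)

variable (K R) in
noncomputable def go : ℕ → (Site × Site) → List Site
  | 0, _ => []
  | k+1, d => emit K R d ++ go k (nxt K R d)

lemma iter_nxt_mem {d : Site × Site} (hd : d ∈ Dir K R) (k : ℕ) :
    (nxt K R)^[k] d ∈ Dir K R := by
  induction k with
  | zero => simpa using hd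
  | succ k ih => rw [Function.iterate_succ_apply']; exact nxt_mem_Dir ih

lemma go_head : ∀ (k : ℕ) (d : Site × Site), d ∈ Dir K R →
    (go K R k d ++ [((nxt K R)^[k] d).2]).head? = some d.2 := by
  intro k
  induction k with
  | zero => intro d _; rfl
  | succ k ih =>
    intro d hd
    have hrw : go K R (k+1) d ++ [((nxt K R)^[k+1] d).2]
        = emit K R d ++ (go K R k (nxt K R d) ++ [((nxt K R)^[k] (nxt K R d)).2]) := by
      rw [Function.iterate_succ_apply]
      simp [go]
    rw [hrw]
    rcases nxt_cases K R d with ⟨_, hn, he, _⟩ | ⟨_, _, hn, he, _⟩ | ⟨_, _, hn, he, _⟩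
    · rw [he]
      rw [List.nil_append, ih _ (nxt_mem_Dir hd)]
      rw [hn]
    · rw [he]; rfl
    · rw [he]; rfl

lemma go_chain : ∀ (k : ℕ) (d : Site × Site), d ∈ Dir K R →
    List.Chain' plusAdj (go K R k d ++ [((nxt K R)^[k] d).2]) := by
  intro k
  induction k with
  | zero => intro d _; simp [go]; exact List.isChain_singleton _
  | succ k ih =>
    intro d hd
    have hu : U4 (rcc (d.2 - d.1)) := (dir_unit hd).rcc
    have hrw : go K R (k+1) d ++ [((nxt K R)^[k+1] d).2]
        = emit K R d ++ (go K R k (nxt K R d) ++ [((nxt K R)^[k] (nxt K R d)).2]) := by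
      rw [Function.iterate_succ_apply]
      simp [go]
    rw [hrw]
    have hih := ih _ (nxt_mem_Dir hd)
    have hhd := go_head k (nxt K R d) (nxt_mem_Dir hd)
    rcases nxt_cases K R d with ⟨_, hn, he, _⟩ | ⟨_, _, hn, he, _⟩ | ⟨_, _, hn, he, _⟩
    · rw [he, List.nil_append]; exact hih
    · rw [he]
      simp only [List.Chain']; rw [List.singleton_append, List.isChain_cons]
      refine ⟨?_, hih⟩
      intro y hy
      rw [hhd] at hy
      simp only [Option.mem_def, Option.some.injEq] at hy
      rw [← hy, hn]
      exact plusAdj_add_right hu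
    · rw [he]
      simp only [List.Chain']; rw [List.cons_append, List.singleton_append, List.isChain_cons_cons]
      constructor
      · exact plusAdj_add_right hu
      rw [List.isChain_cons]
      refine ⟨?_, hih⟩
      intro y hy
      rw [hhd] at hy
      simp only [Option.mem_def, Option.some.injEq] at hy
      rw [← hy, hn]
      rw [plusAdj_iff]
      have : d.1 + rcc (d.2 - d.1) - (d.2 + rcc (d.2 - d.1)) = -(d.2 - d.1) := by ring
      rw [this]
      exact (dir_unit hd).neg

variable (K R) in
noncomputable def cat : ℕ → (Site × Site) → List (Site × Site)
  | 0, _ => []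
  | k+1, d => stepsOf K R d ++ cat k (nxt K R d)

lemma psum_cat (f : Site × Site → Prop) : ∀ (k : ℕ) (d : Site × Site),
    psum f (cat K R k d)
      = ∑ j ∈ Finset.range k, psum f (stepsOf K R ((nxt K R)^[j] d)) := by
  intro k
  induction k with
  | zero => intro d; simp [cat, psum]
  | succ k ih =>
    intro d
    have : cat K R (k+1) d = stepsOf K R d ++ cat K R k (nxt K R d) := rfl
    rw [this, psum_append, ih, Finset.sum_range_succ']
    simp only [Function.iterate_succ_apply, Function.iterate_zero_apply]
    ring

lemma go_pairs : ∀ (k : ℕ) (d : Site × Site), d ∈ Dir K R →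
    pairs (go K R k d ++ [((nxt K R)^[k] d).2]) = cat K R k d := by
  intro k
  induction k with
  | zero => intro d _; simp [go, cat, pairs]
  | succ k ih =>
    intro d hd
    have hrw : go K R (k+1) d ++ [((nxt K R)^[k+1] d).2]
        = emit K R d ++ (go K R k (nxt K R d) ++ [((nxt K R)^[k] (nxt K R d)).2]) := by
      rw [Function.iterate_succ_apply]
      simp [go]
    have hcat : cat K R (k+1) d = stepsOf K R d ++ cat K R k (nxt K R d) := rfl
    rw [hrw, hcat]
    have hih := ih _ (nxt_mem_Dir hd)
    have hhd := go_head k (nxt K R d) (nxt_mem_Dir hd)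
    set REST := go K R k (nxt K R d) ++ [((nxt K R)^[k] (nxt K R d)).2] with hREST
    obtain ⟨REST', hR'⟩ : ∃ R', REST = (nxt K R d).2 :: R' := by
      cases hRE : REST with
      | nil => rw [hRE] at hhd; simp at hhd
      | cons a l =>
        rw [hRE] at hhd
        simp only [List.head?_cons, Option.some.injEq] at hhd
        exact ⟨l, by rw [hhd]⟩
    rcases nxt_cases K R d with ⟨_, hn, he, hs⟩ | ⟨_, _, hn, he, hs⟩ | ⟨_, _, hn, he, hs⟩
    · rw [he, hs, List.nil_append, List.nil_append]
      exact hih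
    · rw [he, hs]
      rw [hR', List.singleton_append, pairs_cons₂, ← hR', hih]
      rw [hn]
      rfl
    · rw [he, hs]
      rw [hR', List.cons_append, List.singleton_append, pairs_cons₂, pairs_cons₂, ← hR', hih]
      rw [hn]
      rfl

lemma go_sites : ∀ (k : ℕ) (d : Site × Site), d ∈ Dir K R →
    ∀ s ∈ go K R k d, s ∈ Ext K R ∧ ∃ c ∈ K, starAdj s c := by
  intro k
  induction k with
  | zero => intro d _ s hs; simp [go] at hs
  | succ k ih =>
    intro d hd s hs
    have hgo : go K R (k+1) d = emit K R d ++ go K R k (nxt K R d) := rfl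
    rw [hgo, List.mem_append] at hs
    rcases hs with hs | hs
    · have hc : d.1 ∈ K := dir_fst_mem hd
      have hstar2 : starAdj d.2 d.1 := by
        obtain ⟨he1, he2, he3⟩ := u4_facts (dir_unit hd)
        have := starAdj_offset (c := d.1) (e := d.2 - d.1) he1 he2 he3
        rwa [show d.1 + (d.2 - d.1) = d.2 by ring] at this
      have hstarx : starAdj (d.2 + rcc (d.2 - d.1)) d.1 := by
        obtain ⟨he1, he2, he3⟩ := u4_diag_facts (dir_unit hd)
        have := starAdj_offset (c := d.1) (e := (d.2 - d.1) + rcc (d.2 - d.1)) he1 he2 he3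
        rwa [show d.1 + ((d.2 - d.1) + rcc (d.2 - d.1)) = d.2 + rcc (d.2 - d.1) by ring] at this
      rcases nxt_cases K R d with ⟨hf, _, he, _⟩ | ⟨_, _, _, he, _⟩ | ⟨h1, h2, _, he, _⟩
      · rw [he] at hs; simp at hs
      · rw [he] at hs
        simp only [List.mem_singleton] at hs
        rw [hs]
        exact ⟨hd.2.1, d.1, hc, hstar2⟩
      · rw [he] at hs
        simp only [List.mem_cons, List.mem_singleton, List.not_mem_nil, or_false] at hs
        rcases hs with rfl | rfl
        · exact ⟨hd.2.1, d.1, hc, hstar2⟩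
        · exact ⟨not_not.1 h1, d.1, hc, hstarx⟩
    · exact ih _ (nxt_mem_Dir hd) s hs

end Geo



lemma exists_dup {l : List Site} (h : ¬ l.Nodup) : ∃ z A B, l = A ++ z :: B ∧ z ∈ B := by
  induction l with
  | nil => simp at h
  | cons a l ih =>
    by_cases ha : a ∈ l
    · exact ⟨a, [], l, rfl, ha⟩
    · have h' : ¬ l.Nodup := fun hn => h (List.nodup_cons.2 ⟨ha, hn⟩)
      obtain ⟨z, A, B, hl, hz⟩ := ih h'
      exact ⟨z, a :: A, B, by rw [hl]; rfl, hz⟩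

lemma rotate_dup {x : Site} {l : List Site} (h : ¬ (x :: l).Nodup)
    (hch : List.Chain' plusAdj (x :: l ++ [x])) :
    ∃ x' l', (x' :: l').length = (x :: l).length ∧ x' ∈ l' ∧
      (∀ s ∈ x' :: l', s ∈ x :: l) ∧ List.Chain' plusAdj (x' :: l' ++ [x']) ∧
      ∀ f : Site × Site → Prop,
        psum f (pairs (x' :: l' ++ [x'])) = psum f (pairs (x :: l ++ [x])) := by
  by_cases hx : x ∈ l
  · exact ⟨x, l, rfl, hx, fun s hs => hs, hch, fun _ => rfl⟩
  · have hnd : ¬ l.Nodup := fun hn => h (List.nodup_cons.2 ⟨hx, hn⟩)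
    obtain ⟨z, A, B, rfl, hz⟩ := exists_dup hnd
    refine ⟨z, B ++ x :: A, ?_, ?_, ?_, ?_, ?_⟩
    · simp; omega
    · simp [hz]
    · intro s hs
      simp only [List.mem_cons, List.mem_append] at hs ⊢
      tauto
    · -- chain for the rotated cycle
      have e1 : x :: (A ++ z :: B) ++ [x] = (x :: A) ++ z :: (B ++ [x]) := by simp
      simp only [List.Chain'] at hch; rw [e1, List.isChain_split] at hch
      have e2 : z :: (B ++ x :: A) ++ [z] = (z :: B) ++ x :: (A ++ [z]) := by simp
      simp only [List.Chain']; rw [e2, List.isChain_split]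
      constructor
      · exact hch.2
      · exact hch.1
    · intro f
      have e1 : x :: (A ++ z :: B) ++ [x] = (x :: A) ++ z :: (B ++ [x]) := by simp
      have e2 : z :: (B ++ x :: A) ++ [z] = (z :: B) ++ x :: (A ++ [z]) := by simp
      rw [e1, e2, pairs_append_cons z (B ++ [x]) (x :: A),
        pairs_append_cons x (A ++ [z]) (z :: B), psum_append, psum_append]
      simp only [List.cons_append]
      ring

lemma extract (f : Site × Site → Prop) : ∀ (n : ℕ) (x : Site) (l : List Site),
    (x :: l).length ≤ n →
    List.Chain' plusAdj (x :: l ++ [x]) →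
    psum f (pairs (x :: l ++ [x])) = 1 →
    ∃ y m', (∀ s ∈ y :: m', s ∈ x :: l) ∧ (y :: m').Nodup ∧
      List.Chain' plusAdj (y :: m' ++ [y]) ∧
      psum f (pairs (y :: m' ++ [y])) = 1 := by
  intro n
  induction n with
  | zero => intro x l hlen; simp at hlen
  | succ n ih =>
    intro x l hlen hch hps
    by_cases hnd : (x :: l).Nodup
    · exact ⟨x, l, fun s hs => hs, hnd, hch, hps⟩
    obtain ⟨x', l', hlen', hx', hsub, hch', hps'⟩ := rotate_dup hnd hch
    rw [← hps' f] at hps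
    obtain ⟨A, B, rfl⟩ := List.append_of_mem hx'
    have e1 : x' :: (A ++ x' :: B) ++ [x'] = (x' :: A) ++ x' :: (B ++ [x']) := by simp
    simp only [List.Chain'] at hch'; rw [e1, List.isChain_split] at hch'
    have hpsplit : psum f (pairs ((x' :: A) ++ x' :: (B ++ [x'])))
        = psum f (pairs ((x' :: A) ++ [x'])) + psum f (pairs (x' :: (B ++ [x']))) := by
      rw [pairs_append_cons x' (B ++ [x']) (x' :: A), psum_append]
    rw [e1, hpsplit] at hps
    have hlA : (x' :: A).length ≤ n := by
      have := hlen'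
      simp only [List.length_cons, List.length_append] at this hlen ⊢
      omega
    have hlB : (x' :: B).length ≤ n := by
      have := hlen'
      simp only [List.length_cons, List.length_append] at this hlen ⊢
      omega
    rcases zmod2_cases (psum f (pairs ((x' :: A) ++ [x']))) with h0 | h1
    · rw [h0, zero_add] at hps
      obtain ⟨y, m', hsub2, hnd2, hch2, hps2⟩ := ih x' B hlB hch'.2 hps
      refine ⟨y, m', ?_, hnd2, hch2, hps2⟩
      intro s hs
      apply hsub
      have := hsub2 s hs
      simp only [List.mem_cons, List.mem_append] at this ⊢
      tauto
    · have hch1 : List.Chain' plusAdj (x' :: A ++ [x']) := hch'.1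
      have h1' : psum f (pairs (x' :: A ++ [x'])) = 1 := by
        simpa [List.cons_append] using h1
      have hch1' : List.Chain' plusAdj (x' :: A ++ [x']) := by
        simpa [List.cons_append] using hch1
      obtain ⟨y, m', hsub2, hnd2, hch2, hps2⟩ := ih x' A hlA hch1' h1'
      refine ⟨y, m', ?_, hnd2, hch2, hps2⟩
      intro s hs
      apply hsub
      have := hsub2 s hs
      simp only [List.mem_cons, List.mem_append] at this ⊢
      tauto


/-! ### crossing parity and surrounding -/

def crossP (z : Site) (p : Site × Site) : Prop :=
  p.1.2 = p.2.2 ∧ p.1.2 < z.2 ∧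
    ((p.1.1 = z.1 - 1 ∧ p.2.1 = z.1) ∨ (p.1.1 = z.1 ∧ p.2.1 = z.1 - 1))

lemma z2_add_self (x : ZMod 2) : x + x = 0 := by
  have h2 : (2 : ZMod 2) = 0 := rfl
  calc x + x = 2 * x := by ring
  _ = 0 := by rw [h2, zero_mul]

lemma z2_eq_of_add_eq_zero {a b : ZMod 2} (h : a + b = 0) : a = b := by
  calc a = a + (b + b) := by rw [z2_add_self, add_zero]
  _ = (a + b) + b := by ring
  _ = b := by rw [h, zero_add]

section Cycle

variable {y : Site} {m : List Site}

lemma mem_cyc {s : Site} : s ∈ (y :: (m ++ [y])) ↔ s ∈ y :: m := by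
  simp only [List.mem_cons, List.mem_append, List.mem_singleton]
  tauto

lemma step_endpoints {p : Site × Site} (hp : p ∈ pairs (y :: (m ++ [y]))) :
    p.1 ∈ y :: m ∧ p.2 ∈ y :: m := by
  obtain ⟨h1, h2⟩ := mem_pairs hp
  exact ⟨mem_cyc.1 h1, mem_cyc.1 h2⟩

lemma psum_add (f g : Site × Site → Prop) (l : List (Site × Site)) :
    psum f l + psum g l = (l.map fun p => ind (f p) + ind (g p)).sum := by
  induction l with
  | nil => simp [psum]
  | cons p l ih =>
    simp only [psum, List.map_cons, List.sum_cons] at *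
    rw [← ih]
    ring

lemma sum_fst_snd (g : Site → ZMod 2) :
    ((pairs (y :: (m ++ [y]))).map fun p => g p.1 + g p.2).sum = 0 := by
  rw [psum_add_split]
  have hfst : (pairs (y :: (m ++ [y]))).map Prod.fst = y :: m := by
    rw [map_fst_pairs]
    rw [show y :: (m ++ [y]) = (y :: m) ++ [y] by simp]
    exact List.dropLast_concat
  have hsnd : (pairs (y :: (m ++ [y]))).map Prod.snd = m ++ [y] := by
    rw [map_snd_pairs]
    rfl
  rw [hfst, hsnd]
  have hperm : (m ++ [y]).Perm (y :: m) := List.perm_append_singleton y m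
  rw [List.Perm.sum_eq (hperm.map g)]
  exact z2_add_self _

lemma vert_invariance (hch : List.Chain' plusAdj (y :: (m ++ [y])))
    {a : Site} (ha : a ∉ y :: m) :
    psum (crossP a) (pairs (y :: (m ++ [y])))
      = psum (crossP (a + (0,1))) (pairs (y :: (m ++ [y]))) := by
  apply psum_congr
  intro p hp
  have hmem := step_endpoints hp
  have h1 : p.1 ≠ a := fun h => ha (h ▸ hmem.1)
  have h2 : p.2 ≠ a := fun h => ha (h ▸ hmem.2)
  obtain ⟨⟨x1,y1⟩, ⟨x2,y2⟩⟩ := p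
  obtain ⟨p0, q0⟩ := a
  simp only [ne_eq, Prod.mk.injEq, not_and] at h1 h2
  simp only [crossP, Prod.mk_add_mk, add_zero]
  constructor
  · rintro ⟨e1, e2, e3⟩
    exact ⟨e1, by omega, e3⟩
  · rintro ⟨e1, e2, e3⟩
    refine ⟨e1, ?_, e3⟩
    rcases e3 with ⟨f1, f2⟩ | ⟨f1, f2⟩
    · have := h2 f2
      omega
    · have := h1 f1
      omega

lemma horiz_invariance (hch : List.Chain' plusAdj (y :: (m ++ [y])))
    {a : Site} (ha : a ∉ y :: m) :
    psum (crossP a) (pairs (y :: (m ++ [y])))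
      = psum (crossP (a + (1,0))) (pairs (y :: (m ++ [y]))) := by
  apply z2_eq_of_add_eq_zero
  have key : ∀ p ∈ pairs (y :: (m ++ [y])),
      ind (crossP a p) + ind (crossP (a + (1,0)) p)
        = ind (p.1.1 = a.1 ∧ p.1.2 < a.2) + ind (p.2.1 = a.1 ∧ p.2.2 < a.2) := by
    intro p hp
    have hplus : U4 (p.2 - p.1) := plusAdj_iff.1 (chain'_pairs hch p hp)
    have hmem := step_endpoints hp
    have h1 : p.1 ≠ a := fun h => ha (h ▸ hmem.1)
    have h2 : p.2 ≠ a := fun h => ha (h ▸ hmem.2)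
    obtain ⟨⟨x1,y1⟩, ⟨x2,y2⟩⟩ := p
    obtain ⟨p0, q0⟩ := a
    simp only [ne_eq, Prod.mk.injEq, not_and] at h1 h2
    unfold U4 at hplus
    simp only [Prod.mk_sub_mk, Prod.mk.injEq] at hplus
    simp only [crossP, Prod.mk_add_mk, add_zero]
    by_cases hA : (y1 = y2 ∧ y1 < q0 ∧ ((x1 = p0 - 1 ∧ x2 = p0) ∨ (x1 = p0 ∧ x2 = p0 - 1))) <;>
    by_cases hB : (y1 = y2 ∧ y1 < q0 ∧ ((x1 = p0 + 1 - 1 ∧ x2 = p0 + 1) ∨ (x1 = p0 + 1 ∧ x2 = p0 + 1 - 1))) <;>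
    by_cases hC : (x1 = p0 ∧ y1 < q0) <;>
    by_cases hD : (x2 = p0 ∧ y2 < q0) <;>
      (first | rw [ind_true hA] | rw [ind_false hA]) <;>
      (first | rw [ind_true hB] | rw [ind_false hB]) <;>
      (first | rw [ind_true hC] | rw [ind_false hC]) <;>
      (first | rw [ind_true hD] | rw [ind_false hD]) <;>
      first
        | rfl
        | decide
        | (exfalso; omega)
  have hsum2 : psum (crossP a) (pairs (y :: (m ++ [y])))
      + psum (crossP (a + (1,0))) (pairs (y :: (m ++ [y])))
      = ((pairs (y :: (m ++ [y]))).map fun p =>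
          ind (p.1.1 = a.1 ∧ p.1.2 < a.2) + ind (p.2.1 = a.1 ∧ p.2.2 < a.2)).sum := by
    rw [psum_add]
    congr 1
    exact List.map_congr_left key
  rw [hsum2]
  exact sum_fst_snd (fun w => ind (w.1 = a.1 ∧ w.2 < a.2))

lemma step_invariance (hch : List.Chain' plusAdj (y :: (m ++ [y])))
    {a b : Site} (hab : plusAdj a b) (ha : a ∉ y :: m) (hb : b ∉ y :: m) :
    psum (crossP a) (pairs (y :: (m ++ [y])))
      = psum (crossP b) (pairs (y :: (m ++ [y]))) := by
  have hu : U4 (b - a) := plusAdj_iff.1 hab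
  rcases hu with h | h | h | h
  · have hba : b = a + (1,0) := by
      have : a + (b - a) = a + (1,0) := by rw [h]
      rwa [show a + (b - a) = b by ring] at this
    rw [hba]
    exact horiz_invariance hch ha
  · have hba : a = b + (1,0) := by
      have : b + (a - b) = b + (1,0) := by
        rw [show a - b = -(b - a) by ring, h]
        norm_num
      rwa [show b + (a - b) = a by ring] at this
    rw [hba]
    exact (horiz_invariance hch hb).symm
  · have hba : b = a + (0,1) := by
      have : a + (b - a) = a + (0,1) := by rw [h]
      rwa [show a + (b - a) = b by ring] at this
    rw [hba]
    exact vert_invariance hch ha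
  · have hba : a = b + (0,1) := by
      have : b + (a - b) = b + (0,1) := by
        rw [show a - b = -(b - a) by ring, h]
        norm_num
      rwa [show b + (a - b) = a by ring] at this
    rw [hba]
    exact (vert_invariance hch hb).symm

lemma gap_even (hch : List.Chain' plusAdj (y :: (m ++ [y]))) (z1 : ℤ) :
    psum (fun p => (p.1.1 = z1 - 1 ∧ p.2.1 = z1) ∨ (p.1.1 = z1 ∧ p.2.1 = z1 - 1))
      (pairs (y :: (m ++ [y]))) = 0 := by
  have key : ∀ p ∈ pairs (y :: (m ++ [y])),
      ind ((p.1.1 = z1 - 1 ∧ p.2.1 = z1) ∨ (p.1.1 = z1 ∧ p.2.1 = z1 - 1))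
        = ind (p.1.1 < z1) + ind (p.2.1 < z1) := by
    intro p hp
    have hplus : U4 (p.2 - p.1) := plusAdj_iff.1 (chain'_pairs hch p hp)
    obtain ⟨⟨x1,y1⟩, ⟨x2,y2⟩⟩ := p
    unfold U4 at hplus
    simp only [Prod.mk_sub_mk, Prod.mk.injEq] at hplus
    by_cases hA : ((x1 = z1 - 1 ∧ x2 = z1) ∨ (x1 = z1 ∧ x2 = z1 - 1)) <;>
    by_cases hC : (x1 < z1) <;>
    by_cases hD : (x2 < z1) <;>
      (first | rw [ind_true hA] | rw [ind_false hA]) <;>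
      (first | rw [ind_true hC] | rw [ind_false hC]) <;>
      (first | rw [ind_true hD] | rw [ind_false hD]) <;>
      first
        | rfl
        | decide
        | (exfalso; omega)
  have h2 : psum (fun p => (p.1.1 = z1 - 1 ∧ p.2.1 = z1) ∨ (p.1.1 = z1 ∧ p.2.1 = z1 - 1))
      (pairs (y :: (m ++ [y])))
      = ((pairs (y :: (m ++ [y]))).map fun p => ind (p.1.1 < z1) + ind (p.2.1 < z1)).sum := by
    unfold psum
    congr 1
    exact List.map_congr_left key
  rw [h2]
  exact sum_fst_snd (fun w => ind (w.1 < z1))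

lemma psum_support (z : Site)
    (h : ∀ s ∈ y :: m, ¬((s.1 = z.1 - 1 ∨ s.1 = z.1) ∧ s.2 < z.2)) :
    psum (crossP z) (pairs (y :: (m ++ [y]))) = 0 := by
  apply psum_eq_zero
  intro p hp hc
  obtain ⟨hm1, _⟩ := step_endpoints hp
  obtain ⟨e1, e2, e3⟩ := hc
  exact h p.1 hm1 ⟨by tauto, e2⟩

lemma psum_top (hch : List.Chain' plusAdj (y :: (m ++ [y]))) (z : Site)
    (htop : ∀ s ∈ y :: m, s.2 < z.2) :
    psum (crossP z) (pairs (y :: (m ++ [y]))) = 0 := by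
  have hcong : psum (crossP z) (pairs (y :: (m ++ [y])))
      = psum (fun p => (p.1.1 = z.1 - 1 ∧ p.2.1 = z.1) ∨ (p.1.1 = z.1 ∧ p.2.1 = z.1 - 1))
          (pairs (y :: (m ++ [y]))) := by
    apply psum_congr
    intro p hp
    have hplus : U4 (p.2 - p.1) := plusAdj_iff.1 (chain'_pairs hch p hp)
    have hh := (step_endpoints hp).1
    have hy1 : p.1.2 < z.2 := htop _ hh
    constructor
    · rintro ⟨_, _, e3⟩; exact e3
    · intro e3
      refine ⟨?_, hy1, e3⟩
      obtain ⟨⟨x1,y1⟩, ⟨x2,y2⟩⟩ := p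
      unfold U4 at hplus
      simp only [Prod.mk_sub_mk, Prod.mk.injEq] at hplus
      simp only at e3 ⊢
      omega
  rw [hcong]
  exact gap_even hch z.1

lemma list_bound (l : List Site) : ∃ B : ℤ, 0 ≤ B ∧ ∀ s ∈ l, |s.1| ≤ B ∧ |s.2| ≤ B := by
  induction l with
  | nil => exact ⟨0, le_refl _, by simp⟩
  | cons a l ih =>
    obtain ⟨B, hB0, hB⟩ := ih
    refine ⟨max B (max |a.1| |a.2|), le_trans hB0 (le_max_left _ _), ?_⟩
    intro s hs
    rcases List.mem_cons.1 hs with rfl | hs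
    · exact ⟨le_max_of_le_right (le_max_left _ _), le_max_of_le_right (le_max_right _ _)⟩
    · obtain ⟨h1, h2⟩ := hB s hs
      exact ⟨le_max_of_le_left h1, le_max_of_le_left h2⟩

lemma surrounds_of_odd (hch : List.Chain' plusAdj (y :: (m ++ [y])))
    (hps : psum (crossP ((0,0) : Site)) (pairs (y :: (m ++ [y]))) = 1)
    (h0 : ((0,0) : Site) ∉ y :: m) :
    Surrounds {a : Site | a ∈ y :: m} (0,0) := by
  refine ⟨h0, ?_⟩
  obtain ⟨B, hB0, hB⟩ := list_bound (y :: m)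
  have hreach : ∀ w : Site, Relation.ReflTransGen
      (fun u v => u ∉ {a : Site | a ∈ y :: m} ∧ v ∉ {a : Site | a ∈ y :: m} ∧ plusAdj u v)
      (0,0) w →
      psum (crossP w) (pairs (y :: (m ++ [y]))) = 1 := by
    intro w hw
    induction hw with
    | refl => exact hps
    | tail hr hstep ih =>
      exact (step_invariance hch hstep.2.2 hstep.1 hstep.2.1) ▸ ih
  have hbox : ∀ w : Site, psum (crossP w) (pairs (y :: (m ++ [y]))) = 1 →
      -B ≤ w.1 ∧ w.1 ≤ B + 1 ∧ -B + 1 ≤ w.2 ∧ w.2 ≤ B + 1 := by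
    intro w hw
    have hle : w.2 ≤ B + 1 := by
      by_contra htop'
      have hh : ∀ s ∈ y :: m, s.2 < w.2 := by
        intro s hs
        have := abs_le.1 (hB s hs).2
        omega
      rw [psum_top hch w hh] at hw
      exact absurd hw (by decide)
    have hex : ∃ s ∈ y :: m, (s.1 = w.1 - 1 ∨ s.1 = w.1) ∧ s.2 < w.2 := by
      by_contra hno
      push_neg at hno
      rw [psum_support w (fun s hs hc => absurd hc.2 (not_lt.2 (hno s hs hc.1)))] at hw
      exact absurd hw (by decide)
    obtain ⟨s, hs, hs1, hs2⟩ := hex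
    have hb1 := abs_le.1 (hB s hs).1
    have hb2 := abs_le.1 (hB s hs).2
    refine ⟨by omega, by omega, by omega, hle⟩
  have hsub : {w : Site | Relation.ReflTransGen
      (fun u v => u ∉ {a : Site | a ∈ y :: m} ∧ v ∉ {a : Site | a ∈ y :: m} ∧ plusAdj u v)
      (0,0) w} ⊆ Set.Icc ((-B, -B+1) : Site) ((B+1, B+1) : Site) := by
    intro w hw
    obtain ⟨c1, c2, c3, c4⟩ := hbox w (hreach w hw)
    constructor
    · exact ⟨c1, c3⟩
    · exact ⟨c2, c4⟩
  exact (Set.finite_Icc _ _).subset hsub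

end Cycle

/-! ### helpers for the total parity computation -/

lemma ind_congr {P Q : Prop} (h : P ↔ Q) : ind P = ind Q := by
  by_cases hP : P
  · rw [ind_true hP, ind_true (h.1 hP)]
  · rw [ind_false hP, ind_false (fun hq => hP (h.2 hq))]

lemma psum_singleton (f : Site × Site → Prop) (p : Site × Site) :
    psum f [p] = ind (f p) := by simp [psum]

lemma psum_pair (f : Site × Site → Prop) (p q : Site × Site) :
    psum f [p, q] = ind (f p) + ind (f q) := by simp [psum]

lemma psum_ne_exists {f : Site × Site → Prop} {l : List (Site × Site)}
    (h : psum f l ≠ 0) : ∃ p ∈ l, f p := by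
  by_contra hno
  push_neg at hno
  exact h (psum_eq_zero hno)

lemma ind_eq_ite (P : Prop) [inst : Decidable P] : ind P = if P then 1 else 0 := by
  by_cases h : P
  · rw [ind_true h, if_pos h]
  · rw [ind_false h, if_neg h]

lemma psum_height_split {l : List (Site × Site)} (f : Site × Site → Prop)
    (s : Finset ℤ) (hsub : ∀ p ∈ l, f p → p.1.2 ∈ s) :
    psum f l = ∑ yy ∈ s, psum (fun p => f p ∧ p.1.2 = yy) l := by
  induction l with
  | nil => simp [psum]
  | cons p l ih =>
    have hl : ∀ p ∈ l, f p → p.1.2 ∈ s := fun q hq => hsub q (List.mem_cons_of_mem _ hq)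
    have hrec := ih hl
    simp only [psum, List.map_cons, List.sum_cons] at hrec ⊢
    rw [Finset.sum_add_distrib, ← hrec]
    congr 1
    by_cases hf : f p
    · have h1 : ∀ yy, ind (f p ∧ p.1.2 = yy) = ind (p.1.2 = yy) :=
        fun yy => ind_congr (by tauto)
      simp only [h1]
      have h2 : ∀ yy : ℤ, ind (p.1.2 = yy) = if p.1.2 = yy then 1 else 0 :=
        fun yy => ind_eq_ite _
      simp only [h2]
      rw [Finset.sum_ite_eq s p.1.2 (fun _ => (1 : ZMod 2))]
      rw [if_pos (hsub p List.mem_cons_self hf), ind_true hf]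
    · have h1 : ∀ yy, ind (f p ∧ p.1.2 = yy) = 0 :=
        fun yy => ind_false (fun hc => hf hc.1)
      simp only [h1, ind_false hf]
      simp

/-- the crossing predicate at a fixed height -/
def crossAt (yy : ℤ) (p : Site × Site) : Prop :=
  crossP ((0,0) : Site) p ∧ p.1.2 = yy

lemma crossAt_PQ {yy : ℤ} (hyy : yy < 0) :
    crossAt yy (((-1,yy) : Site), ((0,yy) : Site)) :=
  ⟨⟨rfl, hyy, Or.inl ⟨by norm_num, rfl⟩⟩, rfl⟩

lemma crossAt_QP {yy : ℤ} (hyy : yy < 0) :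
    crossAt yy (((0,yy) : Site), ((-1,yy) : Site)) :=
  ⟨⟨rfl, hyy, Or.inr ⟨rfl, by norm_num⟩⟩, rfl⟩

lemma not_crossAt_vert {yy : ℤ} {p : Site × Site} (h : p.1.2 ≠ p.2.2) :
    ¬ crossAt yy p := fun hc => h hc.1.1

section TotalParity

variable {K : Set Site} {R : ℤ}

lemma mem_ext_iff_not_fill {x : Site} : x ∈ Ext K R ↔ x ∉ Fill K R := by
  simp [Fill]

lemma eval_c1 {yy : ℤ} (hyy : yy < 0) :
    (if (((-1,yy+1) : Site), ((-1,yy) : Site)) ∈ Dir K R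
      then psum (crossAt yy) (stepsOf K R (((-1,yy+1) : Site), ((-1,yy) : Site)))
      else 0)
    = ind (((-1,yy+1) : Site) ∈ Fill K R ∧ ((-1,yy) : Site) ∉ Fill K R ∧
        ((0,yy) : Site) ∉ Fill K R) := by
  have hplus : plusAdj ((-1,yy+1) : Site) ((-1,yy) : Site) := by
    unfold plusAdj
    simp only
    rw [show ((-1 : ℤ) - (-1)) = 0 by norm_num, show (yy + 1 - yy) = 1 by ring]
    norm_num
  have hsteps : stepsOf K R (((-1,yy+1) : Site), ((-1,yy) : Site))
      = if ((0,yy) : Site) ∈ Fill K R then []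
        else if ((0,yy+1) : Site) ∈ Fill K R then [(((-1,yy) : Site), ((0,yy) : Site))]
        else [(((-1,yy) : Site), ((0,yy) : Site)), (((0,yy) : Site), ((0,yy+1) : Site))] := by
    have h1 : ((-1,yy) : Site) - ((-1,yy+1) : Site) = ((0,-1) : Site) := by
      simp [Prod.mk_sub_mk, Prod.mk.injEq]
    unfold stepsOf
    simp only [h1]
    norm_num [rcc, Prod.mk_add_mk]
  by_cases hA : ((-1,yy+1) : Site) ∈ Fill K R
  · by_cases hP : ((-1,yy) : Site) ∈ Fill K R
    · rw [if_neg (fun hd => (mem_ext_iff_not_fill.1 hd.2.1) hP),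
        ind_false (fun hc => hc.2.1 hP)]
    · rw [if_pos ⟨hA, mem_ext_iff_not_fill.2 hP, hplus⟩, hsteps]
      by_cases hQ : ((0,yy) : Site) ∈ Fill K R
      · rw [if_pos hQ, ind_false (fun hc => hc.2.2 hQ)]
        rfl
      · rw [if_neg hQ, ind_true ⟨hA, hP, hQ⟩]
        by_cases hB : ((0,yy+1) : Site) ∈ Fill K R
        · rw [if_pos hB, psum_singleton, ind_true (crossAt_PQ hyy)]
        · rw [if_neg hB, psum_pair, ind_true (crossAt_PQ hyy),
            ind_false (not_crossAt_vert (by simp <;> omega))]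
          decide
  · rw [if_neg (fun hd => hA hd.1), ind_false (fun hc => hA hc.1)]

lemma eval_c2 {yy : ℤ} (hyy : yy < 0) :
    (if (((0,yy+1) : Site), ((-1,yy+1) : Site)) ∈ Dir K R
      then psum (crossAt yy) (stepsOf K R (((0,yy+1) : Site), ((-1,yy+1) : Site)))
      else 0)
    = ind (((0,yy+1) : Site) ∈ Fill K R ∧ ((-1,yy+1) : Site) ∉ Fill K R ∧
        ((-1,yy) : Site) ∉ Fill K R ∧ ((0,yy) : Site) ∉ Fill K R) := by
  have hplus : plusAdj ((0,yy+1) : Site) ((-1,yy+1) : Site) := by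
    unfold plusAdj
    simp only
    rw [show ((0 : ℤ) - (-1)) = 1 by norm_num, show (yy + 1 - (yy+1)) = 0 by ring]
    norm_num
  have hsteps : stepsOf K R (((0,yy+1) : Site), ((-1,yy+1) : Site))
      = if ((-1,yy) : Site) ∈ Fill K R then []
        else if ((0,yy) : Site) ∈ Fill K R then [(((-1,yy+1) : Site), ((-1,yy) : Site))]
        else [(((-1,yy+1) : Site), ((-1,yy) : Site)), (((-1,yy) : Site), ((0,yy) : Site))] := by
    have h1 : ((-1,yy+1) : Site) - ((0,yy+1) : Site) = ((-1,0) : Site) := by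
      simp [Prod.mk_sub_mk, Prod.mk.injEq]
    have h2 : rcc ((-1,0) : Site) = ((0,-1) : Site) := by
      simp [rcc]
    have h3 : ((-1,yy+1) : Site) + ((0,-1) : Site) = ((-1,yy) : Site) := by
      simp [Prod.mk_add_mk, Prod.mk.injEq]
    have h4 : ((0,yy+1) : Site) + ((0,-1) : Site) = ((0,yy) : Site) := by
      simp [Prod.mk_add_mk, Prod.mk.injEq]
    unfold stepsOf
    simp only [h1, h2, h3, h4]
  by_cases hBq : ((0,yy+1) : Site) ∈ Fill K R
  · by_cases hA : ((-1,yy+1) : Site) ∈ Fill K R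
    · rw [if_neg (fun hd => (mem_ext_iff_not_fill.1 hd.2.1) hA),
        ind_false (fun hc => hc.2.1 hA)]
    · rw [if_pos ⟨hBq, mem_ext_iff_not_fill.2 hA, hplus⟩, hsteps]
      by_cases hP : ((-1,yy) : Site) ∈ Fill K R
      · rw [if_pos hP, ind_false (fun hc => hc.2.2.1 hP)]
        rfl
      · rw [if_neg hP]
        by_cases hQ : ((0,yy) : Site) ∈ Fill K R
        · rw [if_pos hQ, psum_singleton, ind_false (not_crossAt_vert (by simp <;> omega)),
            ind_false (fun hc => hc.2.2.2 hQ)]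
        · rw [if_neg hQ, psum_pair, ind_false (not_crossAt_vert (by simp <;> omega)),
            ind_true (crossAt_PQ hyy), ind_true ⟨hBq, hA, hP, hQ⟩]
          decide
  · rw [if_neg (fun hd => hBq hd.1), ind_false (fun hc => hBq hc.1)]

lemma eval_c3 {yy : ℤ} (hyy : yy < 0) :
    (if (((0,yy-1) : Site), ((0,yy) : Site)) ∈ Dir K R
      then psum (crossAt yy) (stepsOf K R (((0,yy-1) : Site), ((0,yy) : Site)))
      else 0)
    = ind (((0,yy-1) : Site) ∈ Fill K R ∧ ((0,yy) : Site) ∉ Fill K R ∧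
        ((-1,yy) : Site) ∉ Fill K R) := by
  have hplus : plusAdj ((0,yy-1) : Site) ((0,yy) : Site) := by
    unfold plusAdj
    simp only
    rw [show ((0 : ℤ) - 0) = 0 by norm_num, show (yy - 1 - yy) = -1 by ring]
    norm_num
  have hsteps : stepsOf K R (((0,yy-1) : Site), ((0,yy) : Site))
      = if ((-1,yy) : Site) ∈ Fill K R then []
        else if ((-1,yy-1) : Site) ∈ Fill K R then [(((0,yy) : Site), ((-1,yy) : Site))]
        else [(((0,yy) : Site), ((-1,yy) : Site)), (((-1,yy) : Site), ((-1,yy-1) : Site))] := by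
    have h1 : ((0,yy) : Site) - ((0,yy-1) : Site) = ((0,1) : Site) := by
      simp [Prod.mk_sub_mk, Prod.mk.injEq]
    have h2 : rcc ((0,1) : Site) = ((-1,0) : Site) := by
      simp [rcc]
    have h3 : ((0,yy) : Site) + ((-1,0) : Site) = ((-1,yy) : Site) := by
      simp [Prod.mk_add_mk, Prod.mk.injEq]
    have h4 : ((0,yy-1) : Site) + ((-1,0) : Site) = ((-1,yy-1) : Site) := by
      simp [Prod.mk_add_mk, Prod.mk.injEq]
    unfold stepsOf
    simp only [h1, h2, h3, h4]
  by_cases hB' : ((0,yy-1) : Site) ∈ Fill K R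
  · by_cases hQ : ((0,yy) : Site) ∈ Fill K R
    · rw [if_neg (fun hd => (mem_ext_iff_not_fill.1 hd.2.1) hQ),
        ind_false (fun hc => hc.2.1 hQ)]
    · rw [if_pos ⟨hB', mem_ext_iff_not_fill.2 hQ, hplus⟩, hsteps]
      by_cases hP : ((-1,yy) : Site) ∈ Fill K R
      · rw [if_pos hP, ind_false (fun hc => hc.2.2 hP)]
        rfl
      · rw [if_neg hP, ind_true ⟨hB', hQ, hP⟩]
        by_cases hA' : ((-1,yy-1) : Site) ∈ Fill K R
        · rw [if_pos hA', psum_singleton, ind_true (crossAt_QP hyy)]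
        · rw [if_neg hA', psum_pair, ind_true (crossAt_QP hyy),
            ind_false (not_crossAt_vert (by simp <;> omega))]
          decide
  · rw [if_neg (fun hd => hB' hd.1), ind_false (fun hc => hB' hc.1)]

lemma eval_c4 {yy : ℤ} (hyy : yy < 0) :
    (if (((-1,yy-1) : Site), ((0,yy-1) : Site)) ∈ Dir K R
      then psum (crossAt yy) (stepsOf K R (((-1,yy-1) : Site), ((0,yy-1) : Site)))
      else 0)
    = ind (((-1,yy-1) : Site) ∈ Fill K R ∧ ((0,yy-1) : Site) ∉ Fill K R ∧
        ((-1,yy) : Site) ∉ Fill K R ∧ ((0,yy) : Site) ∉ Fill K R) := by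
  have hplus : plusAdj ((-1,yy-1) : Site) ((0,yy-1) : Site) := by
    unfold plusAdj
    simp only
    rw [show ((-1 : ℤ) - 0) = -1 by norm_num, show (yy - 1 - (yy-1)) = 0 by ring]
    norm_num
  have hsteps : stepsOf K R (((-1,yy-1) : Site), ((0,yy-1) : Site))
      = if ((0,yy) : Site) ∈ Fill K R then []
        else if ((-1,yy) : Site) ∈ Fill K R then [(((0,yy-1) : Site), ((0,yy) : Site))]
        else [(((0,yy-1) : Site), ((0,yy) : Site)), (((0,yy) : Site), ((-1,yy) : Site))] := by
    have h1 : ((0,yy-1) : Site) - ((-1,yy-1) : Site) = ((1,0) : Site) := by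
      simp [Prod.mk_sub_mk, Prod.mk.injEq]
    have h2 : rcc ((1,0) : Site) = ((0,1) : Site) := by
      simp [rcc]
    have h3 : ((0,yy-1) : Site) + ((0,1) : Site) = ((0,yy) : Site) := by
      simp [Prod.mk_add_mk, Prod.mk.injEq]
    have h4 : ((-1,yy-1) : Site) + ((0,1) : Site) = ((-1,yy) : Site) := by
      simp [Prod.mk_add_mk, Prod.mk.injEq]
    unfold stepsOf
    simp only [h1, h2, h3, h4]
  by_cases hA' : ((-1,yy-1) : Site) ∈ Fill K R
  · by_cases hB' : ((0,yy-1) : Site) ∈ Fill K R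
    · rw [if_neg (fun hd => (mem_ext_iff_not_fill.1 hd.2.1) hB'),
        ind_false (fun hc => hc.2.1 hB')]
    · rw [if_pos ⟨hA', mem_ext_iff_not_fill.2 hB', hplus⟩, hsteps]
      by_cases hQ : ((0,yy) : Site) ∈ Fill K R
      · rw [if_pos hQ, ind_false (fun hc => hc.2.2.2 hQ)]
        rfl
      · rw [if_neg hQ]
        by_cases hP : ((-1,yy) : Site) ∈ Fill K R
        · rw [if_pos hP, psum_singleton, ind_false (not_crossAt_vert (by simp <;> omega)),
            ind_false (fun hc => hc.2.2.1 hP)]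
        · rw [if_neg hP, psum_pair, ind_false (not_crossAt_vert (by simp <;> omega)),
            ind_true (crossAt_QP hyy), ind_true ⟨hA', hB', hP, hQ⟩]
          decide
  · rw [if_neg (fun hd => hA' hd.1), ind_false (fun hc => hA' hc.1)]

set_option maxHeartbeats 1000000 in
lemma support_claim {yy : ℤ} {d : Site × Site} (hd : d ∈ Dir K R)
    (h : psum (crossAt yy) (stepsOf K R d) ≠ 0) :
    d = (((-1,yy+1) : Site), ((-1,yy) : Site)) ∨
    d = (((0,yy+1) : Site), ((-1,yy+1) : Site)) ∨
    d = (((0,yy-1) : Site), ((0,yy) : Site)) ∨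
    d = (((-1,yy-1) : Site), ((0,yy-1) : Site)) := by
  obtain ⟨p, hp, hc⟩ := psum_ne_exists h
  have hu : U4 (d.2 - d.1) := dir_unit hd
  obtain ⟨⟨a1,a2⟩,⟨b1,b2⟩⟩ := d
  unfold U4 at hu
  simp only [Prod.mk_sub_mk, Prod.mk.injEq] at hu
  simp only [Prod.mk.injEq]
  rcases nxt_cases K R ((a1,a2),(b1,b2)) with ⟨_, _, _, hs⟩ | ⟨_, _, _, _, hs⟩ | ⟨_, _, _, _, hs⟩ <;>
    rw [hs] at hp
  · simp at hp
  · simp only [List.mem_singleton] at hp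
    subst hp
    simp [crossAt, crossP, rcc, Prod.mk_sub_mk, Prod.mk_add_mk] at hc
    omega
  · simp only [List.mem_cons, List.mem_singleton, List.not_mem_nil, or_false] at hp
    rcases hp with hp | hp <;> subst hp <;>
      simp [crossAt, crossP, rcc, Prod.mk_sub_mk, Prod.mk_add_mk] at hc <;>
      omega

variable (K R) in
def rowF (z : ℤ) : Prop := ((-1,z) : Site) ∈ Fill K R ∨ ((0,z) : Site) ∈ Fill K R

lemma rowsum {yy : ℤ} (hyy : yy < 0) (DF : Finset (Site × Site))
    (hDF : ∀ d, d ∈ DF ↔ d ∈ Dir K R) :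
    ∑ d ∈ DF, psum (crossAt yy) (stepsOf K R d)
      = ind (¬ rowF K R yy ∧ rowF K R (yy+1)) + ind (¬ rowF K R yy ∧ rowF K R (yy-1)) := by
  classical
  set c1 : Site × Site := (((-1,yy+1) : Site), ((-1,yy) : Site)) with hc1
  set c2 : Site × Site := (((0,yy+1) : Site), ((-1,yy+1) : Site)) with hc2
  set c3 : Site × Site := (((0,yy-1) : Site), ((0,yy) : Site)) with hc3
  set c4 : Site × Site := (((-1,yy-1) : Site), ((0,yy-1) : Site)) with hc4
  set candF : Finset (Site × Site) := {c1, c2, c3, c4} with hcand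
  set F : (Site × Site) → ZMod 2 :=
    fun d => if d ∈ Dir K R then psum (crossAt yy) (stepsOf K R d) else 0 with hF
  have hstep1 : ∑ d ∈ DF, psum (crossAt yy) (stepsOf K R d) = ∑ d ∈ DF, F d := by
    apply Finset.sum_congr rfl
    intro d hd
    rw [hF]
    simp only
    rw [if_pos ((hDF d).1 hd)]
  have hstep2 : ∑ d ∈ DF, F d = ∑ d ∈ DF ∪ candF, F d := by
    apply Finset.sum_subset Finset.subset_union_left
    intro x _ hx
    rw [hF]
    simp only
    rw [if_neg (fun hmem => hx ((hDF x).2 hmem))]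
  have hstep3 : ∑ d ∈ candF, F d = ∑ d ∈ DF ∪ candF, F d := by
    apply Finset.sum_subset Finset.subset_union_right
    intro x hx hxc
    rw [hF]
    simp only
    by_cases hmem : x ∈ Dir K R
    · rw [if_pos hmem]
      by_contra hne
      rcases support_claim hmem hne with h | h | h | h <;>
        · exfalso
          apply hxc
          rw [hcand, h]
          simp [hc1, hc2, hc3, hc4]
    · rw [if_neg hmem]
  rw [hstep1, hstep2, ← hstep3]
  have hne12 : c1 ≠ c2 := by rw [hc1, hc2]; simp [Prod.ext_iff]
  have hne13 : c1 ≠ c3 := by rw [hc1, hc3]; simp [Prod.ext_iff]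
  have hne14 : c1 ≠ c4 := by rw [hc1, hc4]; simp [Prod.ext_iff]
  have hne23 : c2 ≠ c3 := by rw [hc2, hc3]; simp [Prod.ext_iff]
  have hne24 : c2 ≠ c4 := by rw [hc2, hc4]; simp [Prod.ext_iff]
  have hne34 : c3 ≠ c4 := by rw [hc3, hc4]; simp [Prod.ext_iff]
  have hsum4 : ∑ d ∈ candF, F d = F c1 + F c2 + F c3 + F c4 := by
    rw [hcand]
    rw [Finset.sum_insert (by simp [hne12, hne13, hne14]),
      Finset.sum_insert (by simp [hne23, hne24]),
      Finset.sum_insert (by simp [hne34]),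
      Finset.sum_singleton]
    ring
  rw [hsum4]
  have e1 : F c1 = ind (((-1,yy+1) : Site) ∈ Fill K R ∧ ((-1,yy) : Site) ∉ Fill K R ∧
      ((0,yy) : Site) ∉ Fill K R) := eval_c1 hyy
  have e2 : F c2 = ind (((0,yy+1) : Site) ∈ Fill K R ∧ ((-1,yy+1) : Site) ∉ Fill K R ∧
      ((-1,yy) : Site) ∉ Fill K R ∧ ((0,yy) : Site) ∉ Fill K R) := eval_c2 hyy
  have e3 : F c3 = ind (((0,yy-1) : Site) ∈ Fill K R ∧ ((0,yy) : Site) ∉ Fill K R ∧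
      ((-1,yy) : Site) ∉ Fill K R) := eval_c3 hyy
  have e4 : F c4 = ind (((-1,yy-1) : Site) ∈ Fill K R ∧ ((0,yy-1) : Site) ∉ Fill K R ∧
      ((-1,yy) : Site) ∉ Fill K R ∧ ((0,yy) : Site) ∉ Fill K R) := eval_c4 hyy
  rw [e1, e2, e3, e4]
  unfold rowF
  by_cases hP : ((-1,yy) : Site) ∈ Fill K R <;>
  by_cases hQ : ((0,yy) : Site) ∈ Fill K R <;>
  by_cases hA : ((-1,yy+1) : Site) ∈ Fill K R <;>
  by_cases hB : ((0,yy+1) : Site) ∈ Fill K R <;>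
  by_cases hA' : ((-1,yy-1) : Site) ∈ Fill K R <;>
  by_cases hB' : ((0,yy-1) : Site) ∈ Fill K R <;>
    (simp [ind, hP, hQ, hA, hB, hA', hB']) <;> decide

lemma ind_not_and (P Q : Prop) : ind (¬ P ∧ Q) = (1 + ind P) * ind Q := by
  by_cases hP : P <;> by_cases hQ : Q
  · rw [ind_false (fun h => h.1 hP), ind_true hP, ind_true hQ]; decide
  · rw [ind_false (fun h => hQ h.2), ind_true hP, ind_false hQ]; decide
  · rw [ind_true ⟨hP, hQ⟩, ind_false hP, ind_true hQ]; decide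
  · rw [ind_false (fun h => hQ h.2), ind_false hP, ind_false hQ]; decide

lemma K_subset_fill {x : Site} (hx : x ∈ K) : x ∈ Fill K R := fun hext => hext.1 hx

lemma total_parity (hK : ∀ p ∈ K, |p.1| ≤ R ∧ |p.2| ≤ R) (hR0 : 0 ≤ R)
    (h00 : ((0,0) : Site) ∈ K) (DF : Finset (Site × Site))
    (hDF : ∀ d, d ∈ DF ↔ d ∈ Dir K R) :
    ∑ d ∈ DF, psum (crossP ((0,0) : Site)) (stepsOf K R d) = 1 := by
  classical
  set N : ℤ := R + 3 with hN
  set h : ℤ → ZMod 2 := fun z => ind (rowF K R z) with hh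
  -- boundary values
  have hrow0 : rowF K R 0 := Or.inr (K_subset_fill h00)
  have hrowlow : ∀ z : ℤ, z ≤ -R-1 → ¬ rowF K R z := by
    intro z hz hrow
    have hfar : ∀ x1 : ℤ, ((x1, z) : Site) ∈ Ext K R :=
      fun x1 => far_mem_Ext hK (Or.inr (by rw [abs_of_nonpos (by omega)]; omega))
    rcases hrow with hr | hr
    · exact hr (hfar (-1))
    · exact hr (hfar 0)
  -- split by heights
  have hsplit : ∀ d ∈ DF, psum (crossP ((0,0):Site)) (stepsOf K R d)
      = ∑ yy ∈ Finset.Icc (-N) (-1), psum (crossAt yy) (stepsOf K R d) := by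
    intro d hd
    have hdd : d ∈ Dir K R := (hDF d).1 hd
    have hbound : ∀ p ∈ stepsOf K R d, crossP ((0,0):Site) p → p.1.2 ∈ Finset.Icc (-N) (-1) := by
      intro p hp hc
      have hlow : p.1.2 < 0 := hc.2.1
      have ha : |d.1.1| ≤ R ∧ |d.1.2| ≤ R := hK _ (dir_fst_mem hdd)
      have hu : U4 (d.2 - d.1) := dir_unit hdd
      obtain ⟨⟨a1,a2⟩,⟨b1,b2⟩⟩ := d
      unfold U4 at hu
      simp only [Prod.mk_sub_mk, Prod.mk.injEq] at hu
      simp only [Prod.fst, Prod.snd] at ha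
      have ha2 := abs_le.1 ha.2
      rcases nxt_cases K R ((a1,a2),(b1,b2)) with ⟨_, _, _, hs⟩ | ⟨_, _, _, _, hs⟩ | ⟨_, _, _, _, hs⟩ <;>
        rw [hs] at hp
      · simp at hp
      · simp only [List.mem_singleton] at hp
        subst hp
        simp only [Finset.mem_Icc]
        simp only [rcc, Prod.mk_sub_mk, Prod.mk_add_mk] at hlow ⊢
        omega
      · simp only [List.mem_cons, List.mem_singleton, List.not_mem_nil, or_false] at hp
        rcases hp with hp | hp <;> subst hp <;>
          simp only [Finset.mem_Icc] <;>
          simp only [rcc, Prod.mk_sub_mk, Prod.mk_add_mk] at hlow ⊢ <;>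
          omega
    exact psum_height_split (crossP ((0,0):Site)) (Finset.Icc (-N) (-1)) hbound
  rw [Finset.sum_congr rfl hsplit, Finset.sum_comm]
  have hrows : ∀ yy ∈ Finset.Icc (-N) (-1),
      ∑ d ∈ DF, psum (crossAt yy) (stepsOf K R d)
        = (1 + h yy) * h (yy+1) + (1 + h yy) * h (yy-1) := by
    intro yy hyy
    rw [Finset.mem_Icc] at hyy
    rw [rowsum (by omega) DF hDF]
    rw [ind_not_and, ind_not_and]
  rw [Finset.sum_congr rfl hrows]
  -- the telescope
  have reindex : ∀ (a b c : ℤ) (f : ℤ → ZMod 2),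
      ∑ z ∈ Finset.Icc (a+c) (b+c), f z = ∑ z ∈ Finset.Icc a b, f (z + c) := by
    intro a b c f
    rw [← Finset.map_add_right_Icc, Finset.sum_map]
    rfl
  rw [Finset.sum_add_distrib]
  have hS2 : ∑ yy ∈ Finset.Icc (-N) (-1), (1 + h yy) * h (yy-1)
      = ∑ yy ∈ Finset.Icc (-N) (-1), (1 + h (yy+1)) * h yy := by
    have e3 : Finset.Icc (-N-1 : ℤ) (-2) = insert (-N-1) (Finset.Icc (-N) (-2)) := by
      ext z
      simp only [Finset.mem_Icc, Finset.mem_insert]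
      omega
    have e4 : Finset.Icc (-N : ℤ) (-1) = insert (-1) (Finset.Icc (-N) (-2)) := by
      ext z
      simp only [Finset.mem_Icc, Finset.mem_insert]
      omega
    calc ∑ yy ∈ Finset.Icc (-N) (-1), (1 + h yy) * h (yy-1)
        = ∑ z ∈ Finset.Icc (-N-1 : ℤ) (-2), (1 + h (z+1)) * h (z+1-1) := by
          rw [show Finset.Icc (-N : ℤ) (-1) = Finset.Icc ((-N-1)+1) ((-2)+1) from
            by congr 1 <;> ring]
          exact reindex (-N-1) (-2) 1 (fun z => (1 + h z) * h (z - 1))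
      _ = ∑ z ∈ Finset.Icc (-N-1 : ℤ) (-2), (1 + h (z+1)) * h z := by
          refine Finset.sum_congr rfl (fun z _ => ?_)
          congr 2
          ring
      _ = (1 + h (-N-1+1)) * h (-N-1) + ∑ z ∈ Finset.Icc (-N : ℤ) (-2), (1 + h (z+1)) * h z := by
          rw [e3, Finset.sum_insert (by simp only [Finset.mem_Icc]; omega)]
      _ = ∑ z ∈ Finset.Icc (-N : ℤ) (-2), (1 + h (z+1)) * h z := by
          rw [show h (-N-1) = 0 from ind_false (hrowlow _ (by omega)), mul_zero, zero_add]
      _ = (1 + h (-1+1)) * h (-1) + ∑ z ∈ Finset.Icc (-N : ℤ) (-2), (1 + h (z+1)) * h z := by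
          rw [show (-1 : ℤ) + 1 = 0 by ring, show h 0 = 1 from ind_true hrow0]
          rw [show (1 : ZMod 2) + 1 = 0 by decide, zero_mul, zero_add]
      _ = ∑ z ∈ Finset.Icc (-N : ℤ) (-1), (1 + h (z+1)) * h z := by
          rw [e4, Finset.sum_insert (by simp only [Finset.mem_Icc]; omega)]
  rw [hS2, ← Finset.sum_add_distrib]
  have hpt : ∀ yy : ℤ, (1 + h yy) * h (yy+1) + (1 + h (yy+1)) * h yy = h yy + h (yy+1) := by
    intro yy
    have : ∀ a b : ZMod 2, (1 + a) * b + (1 + b) * a = a + b := by decide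
    exact this _ _
  rw [Finset.sum_congr rfl (fun yy _ => hpt yy), Finset.sum_add_distrib]
  have hShift : ∑ yy ∈ Finset.Icc (-N) (-1), h (yy+1)
      = ∑ yy ∈ Finset.Icc (-N+1) (0 : ℤ), h yy := by
    rw [show Finset.Icc (-N+1 : ℤ) 0 = Finset.Icc ((-N)+1) ((-1)+1) from by congr 1 <;> ring]
    exact (reindex (-N) (-1) 1 h).symm
  rw [hShift]
  have e5 : Finset.Icc (-N : ℤ) (-1) = insert (-N) (Finset.Icc (-N+1) (-1)) := by
    ext z
    simp only [Finset.mem_Icc, Finset.mem_insert]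
    omega
  have e6 : Finset.Icc (-N+1 : ℤ) 0 = insert 0 (Finset.Icc (-N+1) (-1)) := by
    ext z
    simp only [Finset.mem_Icc, Finset.mem_insert]
    omega
  rw [e5, e6, Finset.sum_insert (by simp only [Finset.mem_Icc]; omega),
    Finset.sum_insert (by simp only [Finset.mem_Icc]; omega)]
  rw [show h (-N) = 0 from ind_false (hrowlow _ (by omega)),
    show h 0 = 1 from ind_true hrow0]
  set M := ∑ z ∈ Finset.Icc (-N+1 : ℤ) (-1), h z
  rw [zero_add]
  calc M + (1 + M) = 1 + (M + M) := by ring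
    _ = 1 := by rw [z2_add_self, add_zero]

end TotalParity

end SP

namespace SP2

/-- abstract orbit extraction: from a finite set closed under an injective map
carrying total weight 1 (mod 2), extract a periodic orbit of odd weight. -/
lemma orbit_lemma {α : Type*} [DecidableEq α] (f : α → α) (g : α → ZMod 2) :
    ∀ (S : Finset α), (∀ x ∈ S, f x ∈ S) → (∀ x ∈ S, ∀ y ∈ S, f x = f y → x = y) →
    (∑ x ∈ S, g x = 1) →
    ∃ d ∈ S, ∃ m : ℕ, 0 < m ∧ f^[m] d = d ∧
      (∀ i j, i < j → j < m → f^[i] d ≠ f^[j] d) ∧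
      ∑ k ∈ Finset.range m, g (f^[k] d) = 1 := by
  intro S
  induction S using Finset.strongInduction with
  | _ S ih =>
    intro hmaps hinj hsum
    have hSne : S.Nonempty := by
      rcases S.eq_empty_or_nonempty with rfl | h
      · simp at hsum
      · exact h
    obtain ⟨d, hd⟩ := hSne
    have hiterS : ∀ x ∈ S, ∀ k, f^[k] x ∈ S := by
      intro x hx k
      induction k with
      | zero => simpa using hx
      | succ k ihk => rw [Function.iterate_succ_apply']; exact hmaps _ ihk
    have hiter : ∀ k, f^[k] d ∈ S := hiterS d hd
    have hcancel : ∀ (i : ℕ) (x y : α), x ∈ S → y ∈ S → f^[i] x = f^[i] y → x = y := by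
      intro i
      induction i with
      | zero => intro x y _ _ h; simpa using h
      | succ i ihi =>
        intro x y hx hy h
        rw [Function.iterate_succ_apply', Function.iterate_succ_apply'] at h
        exact ihi x y hx hy (hinj _ (hiterS x hx i) _ (hiterS y hy i) h)
    -- existence of a period
    have hper : ∃ m, 0 < m ∧ f^[m] d = d := by
      have : ¬ Function.Injective (fun k : ℕ => (⟨f^[k] d, hiter k⟩ : {x // x ∈ S})) := by
        intro hinj'
        exact Set.infinite_range_of_injective hinj' (Set.toFinite _)
      rw [Function.not_injective_iff] at this
      obtain ⟨i, j, hij, hne⟩ := this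
      simp only [Subtype.mk.injEq] at hij
      rcases hne.lt_or_gt with h | h
      · refine ⟨j - i, by omega, ?_⟩
        apply hcancel i _ _ (hiter _) hd
        rw [← Function.iterate_add_apply]
        rw [show i + (j - i) = j by omega, hij]
      · refine ⟨i - j, by omega, ?_⟩
        apply hcancel j _ _ (hiter _) hd
        rw [← Function.iterate_add_apply]
        rw [show j + (i - j) = i by omega, ← hij]
    classical
    let m := Nat.find hper
    have hm : 0 < m ∧ f^[m] d = d := Nat.find_spec hper
    have hmin : ∀ k, 0 < k → k < m → f^[k] d ≠ d := by
      intro k hk hkm hkd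
      exact Nat.find_min hper hkm ⟨hk, hkd⟩
    have hdist : ∀ i j, i < j → j < m → f^[i] d ≠ f^[j] d := by
      intro i j hij hjm heq
      have : f^[j - i] d = d := by
        apply hcancel i _ _ (hiter _) hd
        rw [← Function.iterate_add_apply, show i + (j - i) = j by omega, heq]
      exact hmin (j - i) (by omega) (by omega) this
    -- the orbit as a finset
    set O : Finset α := (Finset.range m).image (fun k => f^[k] d) with hO
    have hinjOn : Set.InjOn (fun k => f^[k] d) (Finset.range m) := by
      intro i hi j hj hij
      simp only [Finset.coe_range, Set.mem_Iio, Finset.mem_coe, Finset.mem_range] at hi hj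
      by_contra hne
      rcases Nat.lt_or_ge i j with h | h
      · exact hdist i j h hj hij
      · exact hdist j i (by omega) hi hij.symm
    have hsumO : ∑ x ∈ O, g x = ∑ k ∈ Finset.range m, g (f^[k] d) := by
      rw [hO, Finset.sum_image]
      intro i hi j hj h
      exact hinjOn (by simpa using hi) (by simpa using hj) h
    rcases zmod2_cases (∑ k ∈ Finset.range m, g (f^[k] d)) with h0 | h1
    · -- recurse on S \ O
      have hOsub : O ⊆ S := by
        intro x hx
        simp only [hO, Finset.mem_image, Finset.mem_range] at hx
        obtain ⟨k, _, rfl⟩ := hx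
        exact hiter k
      have hdO : d ∈ O := by
        simp only [hO, Finset.mem_image, Finset.mem_range]
        exact ⟨0, hm.1, rfl⟩
      have hssub : S \ O ⊂ S := Finset.sdiff_ssubset hOsub ⟨d, hdO⟩
      have hfO : ∀ x ∈ O, f x ∈ O := by
        intro x hx
        simp only [hO, Finset.mem_image, Finset.mem_range] at hx ⊢
        obtain ⟨k, hk, rfl⟩ := hx
        rcases Nat.lt_or_ge (k+1) m with h | h
        · exact ⟨k+1, h, Function.iterate_succ_apply' f k d⟩
        · have : k + 1 = m := by omega
          exact ⟨0, hm.1, by simp [← Function.iterate_succ_apply', this, hm.2]⟩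
      have hmaps' : ∀ x ∈ S \ O, f x ∈ S \ O := by
        intro x hx
        rw [Finset.mem_sdiff] at hx ⊢
        refine ⟨hmaps _ hx.1, fun hfx => hx.2 ?_⟩
        -- f x ∈ O ⇒ x ∈ O
        simp only [hO, Finset.mem_image, Finset.mem_range] at hfx ⊢
        obtain ⟨k, hk, hkx⟩ := hfx
        rcases Nat.eq_zero_or_pos k with rfl | hkpos
        · -- f x = d = f^[m] d = f (f^[m-1] d)
          refine ⟨m - 1, by omega, ?_⟩
          symm
          apply hinj _ hx.1 _ (hiter _)
          have e : f (f^[m-1] d) = f^[m] d := by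
            have h2 := (Function.iterate_succ_apply' f (m-1) d).symm
            rwa [show (m-1).succ = m by omega] at h2
          rw [e, hm.2]
          simpa using hkx.symm
        · refine ⟨k - 1, by omega, ?_⟩
          symm
          apply hinj _ hx.1 _ (hiter _)
          have e : f (f^[k-1] d) = f^[k] d := by
            have h2 := (Function.iterate_succ_apply' f (k-1) d).symm
            rwa [show (k-1).succ = k by omega] at h2
          rw [e]
          exact hkx.symm
      have hinj' : ∀ x ∈ S \ O, ∀ y ∈ S \ O, f x = f y → x = y := by
        intro x hx y hy h
        exact hinj x (Finset.mem_sdiff.1 hx).1 y (Finset.mem_sdiff.1 hy).1 h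
      have hsum' : ∑ x ∈ S \ O, g x = 1 := by
        rw [Finset.sum_sdiff_eq_sub hOsub, hsumO, h0, sub_zero, hsum]
      obtain ⟨d', hd', rest⟩ := ih (S \ O) hssub hmaps' hinj' hsum'
      exact ⟨d', (Finset.mem_sdiff.1 hd').1, rest⟩
    · exact ⟨d, hd, m, hm.1, hm.2, hdist, h1⟩

end SP2

lemma starAdj_symm {a b : Site} (h : starAdj a b) : starAdj b a :=
  ⟨h.1.symm, by rw [abs_sub_comm]; exact h.2.1, by rw [abs_sub_comm]; exact h.2.2⟩

open SP SP2 in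
/-- If `C(0)` is finite and nonempty, there is a plus-connected
`S`-cycle of vacant sites, each star-adjacent to some site of `C(0)`, whose site
set surrounds the origin. -/
theorem starComp_surrounded_by_plus_cycle (ω : Site → Bool)
    (hfin : (starComp ω).Finite) (hne : (starComp ω).Nonempty) :
    ∃ L : List Site, IsPlusSCycle L ∧
      (∀ y ∈ L, ω y = false ∧ ∃ b ∈ starComp ω, starAdj y b) ∧
      Surrounds {a | a ∈ L} (0, 0) := by
  classical
  set K := starComp ω with hKdef
  obtain ⟨a0, ha0⟩ := hne
  have hω0 : ω (0,0) = true := ha0.1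
  have h00 : ((0,0) : Site) ∈ K := ⟨hω0, hω0, Relation.ReflTransGen.refl⟩
  obtain ⟨R, hR0, hRb⟩ := SP.list_bound hfin.toFinset.toList
  have hK : ∀ p ∈ K, |p.1| ≤ R ∧ |p.2| ≤ R := by
    intro p hp
    exact hRb p (Finset.mem_toList.2 (hfin.mem_toFinset.2 hp))
  have hocc : ∀ s b, b ∈ K → ω s = true → starAdj s b → s ∈ K := by
    intro s b hb hs hsb
    exact ⟨hb.1, hs, hb.2.2.tail ⟨hb.2.1, hs, starAdj_symm hsb⟩⟩
  have hvac : ∀ s, s ∈ SP.Ext K R → (∃ c ∈ K, starAdj s c) → ω s = false := by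
    intro s hsE ⟨c, hc, hsc⟩
    cases hωs : ω s with
    | false => rfl
    | true => exact absurd (hocc s c hc hωs hsc) hsE.1
  have hDirFin : (SP.Dir K R).Finite := SP.dir_finite hfin
  set DF := hDirFin.toFinset with hDFdef
  have hDF : ∀ d, d ∈ DF ↔ d ∈ SP.Dir K R := fun d => hDirFin.mem_toFinset
  have hT : ∑ d ∈ DF, SP.psum (SP.crossP ((0,0) : Site)) (SP.stepsOf K R d) = 1 :=
    SP.total_parity hK hR0 h00 DF hDF
  have hmaps : ∀ x ∈ DF, SP.nxt K R x ∈ DF :=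
    fun x hx => (hDF _).2 (SP.nxt_mem_Dir ((hDF _).1 hx))
  have hinj : ∀ x ∈ DF, ∀ z ∈ DF, SP.nxt K R x = SP.nxt K R z → x = z := by
    intro x hx z hz hxz
    have h1 := SP.prv_nxt ((hDF _).1 hx)
    have h2 := SP.prv_nxt ((hDF _).1 hz)
    rw [← h1, ← h2, hxz]
  obtain ⟨d₀, hd₀, mm, hm0, hmper, hdist, hsum1⟩ :=
    SP2.orbit_lemma (SP.nxt K R)
      (fun d => SP.psum (SP.crossP ((0,0) : Site)) (SP.stepsOf K R d)) DF hmaps hinj hT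
  have hd₀Dir : d₀ ∈ SP.Dir K R := (hDF _).1 hd₀
  set W := SP.go K R mm d₀ with hWdef
  have hpc : SP.psum (SP.crossP ((0,0) : Site))
      (SP.pairs (W ++ [((SP.nxt K R)^[mm] d₀).2])) = 1 := by
    rw [SP.go_pairs mm d₀ hd₀Dir, SP.psum_cat]
    exact hsum1
  rw [hmper] at hpc
  have hWne : W ≠ [] := by
    intro hW
    rw [hW, List.nil_append, SP.pairs_single, SP.psum_nil] at hpc
    exact absurd hpc (by decide)
  have hhead := SP.go_head mm d₀ hd₀Dir
  rw [hmper] at hhead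
  obtain ⟨l, hWl⟩ : ∃ l, W = d₀.2 :: l := by
    cases hWc : W with
    | nil => exact absurd hWc hWne
    | cons a l =>
      rw [← hWdef, hWc] at hhead
      simp only [List.cons_append, List.head?_cons, Option.some.injEq] at hhead
      exact ⟨l, by rw [hhead]⟩
  have hch : List.Chain' plusAdj (d₀.2 :: (l ++ [d₀.2])) := by
    have hgc := SP.go_chain mm d₀ hd₀Dir
    rw [hmper, ← hWdef, hWl] at hgc
    simpa using hgc
  have hps : SP.psum (SP.crossP ((0,0) : Site))
      (SP.pairs (d₀.2 :: (l ++ [d₀.2]))) = 1 := by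
    rw [hWl] at hpc
    simpa using hpc
  obtain ⟨y, m', hsub, hnd, hch2, hps2⟩ :=
    SP.extract (SP.crossP ((0,0) : Site)) (d₀.2 :: l).length d₀.2 l (le_refl _) hch hps
  have hsites : ∀ s ∈ y :: m', s ∈ SP.Ext K R ∧ ∃ c ∈ K, starAdj s c := by
    intro s hs
    have hsW : s ∈ W := by
      rw [hWl]
      exact hsub s hs
    exact SP.go_sites mm d₀ hd₀Dir s hsW
  have hprop : ∀ s ∈ y :: m', ω s = false ∧ ∃ b ∈ starComp ω, starAdj s b :=
    fun s hs => ⟨hvac s (hsites s hs).1 (hsites s hs).2, (hsites s hs).2⟩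
  have h0no : ((0,0) : Site) ∉ y :: m' := fun h => ((hsites _ h).1).1 h00
  refine ⟨y :: m', ⟨by simp, hnd, ?_, ?_⟩, hprop, ?_⟩
  · have hpre : (y :: m') <+: (y :: (m' ++ [y])) := ⟨[y], by simp⟩
    exact hch2.prefix hpre
  · intro a ha b hb
    have hay : y = a := by simpa using ha
    have hch3 : List.Chain' plusAdj ((y :: m') ++ [y]) := by simpa using hch2
    simp only [List.Chain'] at hch3; rw [List.isChain_append] at hch3
    exact hay ▸ (hch3.2.2 b hb y (by simp))
  · exact SP.surrounds_of_odd hch2 hps2 h0no
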